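/- Characterization of weak initials: for any execution E = s_0, a_0, s_1, …, s_n from a state s of a deterministic LTS satisfying the independence axioms, a thread t is a weak initial of E if and only if there exists an index i < n with tid(a_i) = t such that a_i is independent of a_j for every j < i. -/
import Mathlib


/-- A labeled transition system over states `S`, actions `A`, and thread ids `T`. -/
structure LTS (S A T : Type) where
  tr : S → A → S → Prop
  tid : A → T

namespace LTS

variable {S A T : Type}

/-- Determinism: for every state and thread there is at most one outgoing transition
labeled by an action of that thread. -/
def Deterministic (L : LTS S A T) : Prop :=
  ∀ ⦃s a a' s1 s2⦄, L.tr s a s1 → L.tr s a' s2 → L.tid a = L.tid a' → a = a' ∧ s1 = s2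

/-- Thread `t` is enabled in state `s`. -/
def Enabled (L : LTS S A T) (s : S) (t : T) : Prop :=
  ∃ a s', L.tr s a s' ∧ L.tid a = t

/-- The set of threads enabled in `s`. -/
def enabledSet (L : LTS S A T) (s : S) : Set T := {t | L.Enabled s t}

/-- A state is final if no thread is enabled in it. -/
def Final (L : LTS S A T) (s : S) : Prop := ∀ t, ¬ L.Enabled s t

end LTS

/-- Executions of a transition relation `R` from a state: a list of (action, next state)
pairs forming an alternating sequence of states and actions. -/
inductive ExecOf {S A : Type} (R : S → A → S → Prop) : S → List (A × S) → Prop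
  | nil (s : S) : ExecOf R s []
  | cons {s : S} {a : A} {s' : S} {E : List (A × S)} :
      R s a s' → ExecOf R s' E → ExecOf R s ((a, s') :: E)

/-- Executions of the LTS `L` from a state. -/
def LTS.IsExec {S A T : Type} (L : LTS S A T) : S → List (A × S) → Prop := ExecOf L.tr

/-- The state in which an execution from `s` ends. -/
def endState {S A : Type} (s : S) (E : List (A × S)) : S := (E.map Prod.snd).getLastD s

/-- `ind` is an independence relation for `L`: symmetric, and independent actions have
distinct thread ids. -/
def IndepRel {S A T : Type} (L : LTS S A T) (ind : A → A → Prop) : Prop :=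
  (∀ a a', ind a a' → ind a' a) ∧ (∀ a a', ind a a' → L.tid a ≠ L.tid a')

/-- Commutation axiom: consecutive independent transitions can be swapped,
reaching the same state. -/
def Commutation {S A T : Type} (L : LTS S A T) (ind : A → A → Prop) : Prop :=
  ∀ a a' s s1 s2, ind a a' → L.tr s a s1 → L.tr s1 a' s2 →
    ∃ s1', L.tr s a' s1' ∧ L.tr s1' a s2

/-- Enabledness preservation axiom: executing a transition independent of the transition
of another enabled thread keeps that thread enabled with the same action. -/
def EnabledPreserved {S A T : Type} (L : LTS S A T) (ind : A → A → Prop) : Prop :=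
  ∀ s a s1 a' s1', L.tr s a s1 → L.tr s a' s1' → L.tid a ≠ L.tid a' → ind a a' →
    ∃ s2, L.tr s1 a' s2

/-- An action is invisible if it is independent of every action of every other thread. -/
def Invisible {S A T : Type} (L : LTS S A T) (ind : A → A → Prop) (a : A) : Prop :=
  ∀ a', L.tid a' ≠ L.tid a → ind a a'

/-- A single swap of two consecutive transitions labeled by independent actions,
both sides being executions from `s`. -/
inductive SwapExec {S A T : Type} (L : LTS S A T) (ind : A → A → Prop) (s : S) :
    List (A × S) → List (A × S) → Prop
  | swap (u v : List (A × S)) (a a' : A) (x y x' : S) :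
      ind a a' →
      L.IsExec s (u ++ (a, x) :: (a', y) :: v) →
      L.IsExec s (u ++ (a', x') :: (a, y) :: v) →
      SwapExec L ind s (u ++ (a, x) :: (a', y) :: v) (u ++ (a', x') :: (a, y) :: v)

/-- The smallest equivalence relation containing `r`. -/
inductive EqvClosure {α : Type} (r : α → α → Prop) : α → α → Prop
  | rel {x y : α} : r x y → EqvClosure r x y
  | refl (x : α) : EqvClosure r x x
  | symm {x y : α} : EqvClosure r x y → EqvClosure r y x
  | trans {x y z : α} : EqvClosure r x y → EqvClosure r y z → EqvClosure r x z

/-- Two executions from `s` are equivalent if one is obtained from the other by a finite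
sequence of swaps of consecutive independent transitions. -/
def ExecEquiv {S A T : Type} (L : LTS S A T) (ind : A → A → Prop) (s : S) :
    List (A × S) → List (A × S) → Prop :=
  EqvClosure (SwapExec L ind s)

/-- Thread `t` is a weak initial of execution `E` from `s`: some equivalent execution
starts with a transition of `t`. -/
def WeakInitial {S A T : Type} (L : LTS S A T) (ind : A → A → Prop) (s : S)
    (E : List (A × S)) (t : T) : Prop :=
  ∃ E', L.IsExec s E' ∧ ExecEquiv L ind s E E' ∧
    ∃ p rest, E' = p :: rest ∧ L.tid p.1 = t

/-- `Q` is a source set for `s`: every nonempty execution from `s` ending in a final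
state has a weak initial thread in `Q`. -/
def IsSourceSet {S A T : Type} (L : LTS S A T) (ind : A → A → Prop) (s : S)
    (Q : Set T) : Prop :=
  ∀ E, L.IsExec s E → E ≠ [] → L.Final (endState s E) →
    ∃ t ∈ Q, WeakInitial L ind s E t

/-- `P ⊆ enabled(s)` is a persistent set for `s`: in every execution from `s` whose
actions all have thread ids outside `P`, every action is independent of the action of
`next(s, t)` for every `t ∈ P`. -/
def IsPersistentSet {S A T : Type} (L : LTS S A T) (ind : A → A → Prop) (s : S)
    (P : Set T) : Prop :=
  (∀ t ∈ P, L.Enabled s t) ∧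
  ∀ E, L.IsExec s E → (∀ p ∈ E, L.tid p.1 ∉ P) →
    ∀ p ∈ E, ∀ t ∈ P, ∀ a s', L.tr s a s' → L.tid a = t → ind p.1 a

/-- Acyclicity: no execution visits the same state twice. -/
def Acyclic {S A T : Type} (L : LTS S A T) : Prop :=
  ∀ s E, L.IsExec s E → (s :: E.map Prod.snd).Nodup

/-- `s'` is reachable from `s` via transitions of the relation `R`. -/
def ReachableVia {S A : Type} (R : S → A → S → Prop) (s s' : S) : Prop :=
  ∃ E, ExecOf R s E ∧ endState s E = s'

section WeakInitialAux

variable {S A T : Type}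

lemma execOf_cons_iff {R : S → A → S → Prop} {s : S} {a : A} {x : S} {E : List (A × S)} :
    ExecOf R s ((a, x) :: E) ↔ R s a x ∧ ExecOf R x E := by
  constructor
  · intro h; cases h with | cons h1 h2 => exact ⟨h1, h2⟩
  · rintro ⟨h1, h2⟩; exact .cons h1 h2

lemma endState_cons {s : S} {a : A} {x : S} {u : List (A × S)} :
    endState s ((a, x) :: u) = endState x u := by
  simp only [endState, List.map_cons, List.getLastD_cons]

lemma execOf_append_iff {R : S → A → S → Prop} {u v : List (A × S)} :
    ∀ {s : S}, ExecOf R s (u ++ v) ↔ ExecOf R s u ∧ ExecOf R (endState s u) v := by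
  induction u with
  | nil =>
      intro s
      simp only [List.nil_append, endState, List.map_nil, List.getLastD_nil]
      exact ⟨fun h => ⟨.nil s, h⟩, fun ⟨_, h⟩ => h⟩
  | cons p u ih =>
      intro s
      obtain ⟨a, x⟩ := p
      rw [List.cons_append, execOf_cons_iff, execOf_cons_iff, endState_cons, ih, and_assoc]

/-- The prefix-independence property characterizing weak initials. -/
def Pprop (L : LTS S A T) (ind : A → A → Prop) (E : List (A × S)) (t : T) : Prop :=
  ∃ i : ℕ, ∃ ai : A, E[i]?.map Prod.fst = some ai ∧ L.tid ai = t ∧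
    ∀ j < i, ∀ aj : A, E[j]?.map Prod.fst = some aj → ind ai aj

lemma getElem?_append_lt {u l : List (A × S)} {j : ℕ} (h : j < u.length) :
    (u ++ l)[j]? = u[j]? := by rw [List.getElem?_append]; simp [h]

lemma getElem?_append_ge {u l : List (A × S)} {j : ℕ} (h : u.length ≤ j) :
    (u ++ l)[j]? = l[j - u.length]? := by rw [List.getElem?_append]; simp [Nat.not_lt.mpr h]

lemma swap_lt {u v : List (A × S)} {b c : A} {x y : S} {j : ℕ} (h : j < u.length) :
    (u ++ (b, x) :: (c, y) :: v)[j]? = u[j]? := getElem?_append_lt h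

lemma swap_eq {u v : List (A × S)} {b c : A} {x y : S} :
    (u ++ (b, x) :: (c, y) :: v)[u.length]? = some (b, x) := by
  rw [getElem?_append_ge (le_refl _)]; simp

lemma swap_eq1 {u v : List (A × S)} {b c : A} {x y : S} :
    (u ++ (b, x) :: (c, y) :: v)[u.length + 1]? = some (c, y) := by
  rw [getElem?_append_ge (by omega)]
  simp

lemma swap_gt {u v : List (A × S)} {b c : A} {x y : S} {j : ℕ} (h : u.length + 1 < j) :
    (u ++ (b, x) :: (c, y) :: v)[j]? = v[j - u.length - 2]? := by
  rw [getElem?_append_ge (by omega)]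
  have h3 : j - u.length = (j - u.length - 2) + 2 := by omega
  rw [h3]
  simp

lemma Pprop_swap {L : LTS S A T} {ind : A → A → Prop}
    (u v : List (A × S)) (b c : A) (x y x' : S) (t : T)
    (hbc : ind b c)
    (hP : Pprop L ind (u ++ (b, x) :: (c, y) :: v) t) :
    Pprop L ind (u ++ (c, x') :: (b, y) :: v) t := by
  obtain ⟨i, ai, hget, htid, hprev⟩ := hP
  rcases lt_trichotomy i u.length with hi | hi | hi
  · -- i < u.length : same index
    refine ⟨i, ai, ?_, htid, ?_⟩
    · rw [swap_lt hi]; rwa [swap_lt hi] at hget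
    · intro j hj aj hj2
      exact hprev j hj aj
        (by rw [swap_lt (hj.trans hi)]; rwa [swap_lt (hj.trans hi)] at hj2)
  · -- i = u.length : ai = b, move to u.length + 1
    rw [hi, swap_eq] at hget
    simp only [Option.map_some, Option.some.injEq] at hget
    refine ⟨u.length + 1, ai, ?_, htid, ?_⟩
    · rw [swap_eq1]; simp [hget]
    · intro j hj aj hj2
      by_cases h : j < u.length
      · exact hprev j (by omega) aj (by rw [swap_lt h]; rwa [swap_lt h] at hj2)
      · have hju : j = u.length := by omega
        subst hju
        rw [swap_eq] at hj2
        simp only [Option.map_some, Option.some.injEq] at hj2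
        rw [← hj2, ← hget]; exact hbc
  · rcases Nat.lt_or_ge (u.length + 1) i with hi2 | hi2
    · -- i > u.length + 1 : same index
      refine ⟨i, ai, ?_, htid, ?_⟩
      · rw [swap_gt hi2]; rwa [swap_gt hi2] at hget
      · intro j hj aj hj2
        by_cases h : j < u.length
        · exact hprev j hj aj (by rw [swap_lt h]; rwa [swap_lt h] at hj2)
        · by_cases h1 : j = u.length
          · have hc := hprev (u.length + 1) (by omega) c (by rw [swap_eq1]; rfl)
            subst h1
            rw [swap_eq] at hj2
            simp only [Option.map_some, Option.some.injEq] at hj2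
            rw [← hj2]; exact hc
          · by_cases h2 : j = u.length + 1
            · have hb := hprev u.length (by omega) b (by rw [swap_eq]; rfl)
              subst h2
              rw [swap_eq1] at hj2
              simp only [Option.map_some, Option.some.injEq] at hj2
              rw [← hj2]; exact hb
            · have hgt : u.length + 1 < j := by omega
              exact hprev j hj aj (by rw [swap_gt hgt]; rwa [swap_gt hgt] at hj2)
    · -- i = u.length + 1 : ai = c, move to u.length
      have hi3 : i = u.length + 1 := by omega
      rw [hi3, swap_eq1] at hget
      simp only [Option.map_some, Option.some.injEq] at hget
      refine ⟨u.length, ai, ?_, htid, ?_⟩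
      · rw [swap_eq]; simp [hget]
      · intro j hj aj hj2
        exact hprev j (by omega) aj (by rw [swap_lt hj]; rwa [swap_lt hj] at hj2)

lemma Pprop_execEquiv {L : LTS S A T} {ind : A → A → Prop}
    (hsym : ∀ a a', ind a a' → ind a' a) {s : S} {E1 E2 : List (A × S)}
    (h : ExecEquiv L ind s E1 E2) (t : T) : Pprop L ind E1 t ↔ Pprop L ind E2 t := by
  induction h with
  | rel h =>
      cases h with
      | swap u v a a' x y x' hind h1 h2 =>
          exact ⟨Pprop_swap u v a a' x y x' t hind,
            Pprop_swap u v a' a x' y x t (hsym _ _ hind)⟩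
  | refl => exact Iff.rfl
  | symm _ ih => exact ih.symm
  | trans _ _ ih1 ih2 => exact ih1.trans ih2

lemma weakInitial_of_indep {L : LTS S A T} {ind : A → A → Prop}
    (hsym : ∀ a a', ind a a' → ind a' a) (hcomm : Commutation L ind) :
    ∀ (i : ℕ) (s : S) (E : List (A × S)), L.IsExec s E →
      ∀ ai : A, E[i]?.map Prod.fst = some ai →
      (∀ j < i, ∀ aj : A, E[j]?.map Prod.fst = some aj → ind ai aj) →
      WeakInitial L ind s E (L.tid ai) := by
  intro i
  induction i with
  | zero =>
      intro s E hE ai hget _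
      match E, hget with
      | (a, x) :: rest, hget =>
          simp only [List.getElem?_cons_zero, Option.map_some, Option.some.injEq] at hget
          exact ⟨(a, x) :: rest, hE, .refl _, (a, x), rest, rfl, by simp [hget]⟩
  | succ k ih =>
      intro s E hE ai hget hprev
      have hlen : k + 1 < E.length := by
        by_contra h
        rw [List.getElem?_eq_none (by omega)] at hget
        simp at hget
      have hlenk : k < E.length := by omega
      rcases hPk : E[k] with ⟨a, x⟩
      rcases hQk : E[k + 1] with ⟨a', y⟩
      have hum : (E.take k).length = k := by
        rw [List.length_take]; omega
      have hEeq : E = E.take k ++ (a, x) :: (a', y) :: E.drop (k + 2) := by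
        conv_lhs => rw [← List.take_append_drop k E]
        rw [List.drop_eq_getElem_cons hlenk, List.drop_eq_getElem_cons hlen, hPk, hQk]
      have hai : a' = ai := by
        rw [List.getElem?_eq_getElem hlen, hQk] at hget
        simpa using hget
      subst hai
      have hind' : ind a' a :=
        hprev k (Nat.lt_succ_self k) a (by rw [List.getElem?_eq_getElem hlenk, hPk]; rfl)
      have hE' : ExecOf L.tr s (E.take k ++ (a, x) :: (a', y) :: E.drop (k + 2)) := by
        rw [← hEeq]; exact hE
      obtain ⟨hu_ex, hrest⟩ := execOf_append_iff.mp hE'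
      rw [execOf_cons_iff] at hrest
      obtain ⟨htr1, hrest⟩ := hrest
      rw [execOf_cons_iff] at hrest
      obtain ⟨htr2, hv_ex⟩ := hrest
      obtain ⟨x', htr1', htr2'⟩ := hcomm a a' _ x y (hsym _ _ hind') htr1 htr2
      have hE2 : ExecOf L.tr s (E.take k ++ (a', x') :: (a, y) :: E.drop (k + 2)) :=
        execOf_append_iff.mpr ⟨hu_ex,
          execOf_cons_iff.mpr ⟨htr1', execOf_cons_iff.mpr ⟨htr2', hv_ex⟩⟩⟩
      have hswap := SwapExec.swap (L := L) (ind := ind) (s := s) (E.take k) (E.drop (k + 2))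
        a a' x y x' (hsym _ _ hind') hE' hE2
      rw [← hEeq] at hswap
      have hIH := ih s (E.take k ++ (a', x') :: (a, y) :: E.drop (k + 2)) hE2 a'
        (by rw [getElem?_append_ge (by omega : (E.take k).length ≤ k)]
            simp [hum])
        (by intro j hj aj hj2
            apply hprev j (by omega)
            rw [swap_lt (by omega : j < (E.take k).length)] at hj2
            rwa [List.getElem?_take, if_pos hj] at hj2)
      obtain ⟨E', hE'ex, hequiv, p, rest, hcons, htid⟩ := hIH
      exact ⟨E', hE'ex, .trans (.rel hswap) hequiv, p, rest, hcons, htid⟩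

end WeakInitialAux

/-- Characterization of weak initials: for any execution
`E = s_0, a_0, s_1, …, s_n` from a state `s` of a deterministic LTS satisfying the
independence axioms, a thread `t` is a weak initial of `E` if and only if there exists
an index `i < n` with `tid(a_i) = t` such that `a_i` is independent of `a_j` for every
`j < i`. -/
theorem weakInitial_iff {S A T : Type} (L : LTS S A T) (ind : A → A → Prop)
    (hdet : L.Deterministic) (hind : IndepRel L ind)
    (hcomm : Commutation L ind) (hen : EnabledPreserved L ind)
    (s : S) (E : List (A × S)) (hE : L.IsExec s E) (t : T) :
    WeakInitial L ind s E t ↔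
      ∃ i : ℕ, ∃ ai : A, E[i]?.map Prod.fst = some ai ∧ L.tid ai = t ∧
        ∀ j < i, ∀ aj : A, E[j]?.map Prod.fst = some aj → ind ai aj := by
  constructor
  · rintro ⟨E', hE'ex, heq, p, rest, rfl, htid⟩
    have hP : Pprop L ind (p :: rest) t :=
      ⟨0, p.1, by simp, htid, by intro j hj; omega⟩
    exact (Pprop_execEquiv hind.1 heq t).mpr hP
  · rintro ⟨i, ai, hget, rfl, hprev⟩
    exact weakInitial_of_indep hind.1 hcomm i s E hE ai hget hprev
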